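/- arXiv:2108.01302 — 2 statements merged into one kernel-verified Lean document; each statement's English description precedes it below -/
import Mathlib

section
/- Let K be a compact metrizable abelian group with Haar probability measure m, G a countable abelian group, ρ : G → K a homomorphism with dense image, and f̃_1,…,f̃_d : K → [0,1] measurable. Suppose each f̃_i is within ε/2^d in L²(m)-norm of a trigonometric polynomial with values in [0,1]. Then the function φ : G → ℝ, φ(t) := ∫_{K^d} f̃_d(k + ρ(t) − Σ_{j<d} c_j s_j) ∏_{j<d} f̃_j(k + c_d s_j) dk ds_1 ⋯ ds_{d−1}, is within ε (in sup norm on G) of a trigonometric polynomial on G; in particular φ is uniformly almost periodic on G. -/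
/-!
Replacing `f̃_d` and the `f̃_j` by their trigonometric approximants `p` and `q_j` changes the
integrand pointwise by at most `|f̃_d - p| + Σ_j |f̃_j - q_j|` at shifted arguments (all factors
lie in the unit disc), so by translation invariance of Haar measure the correlation moves by at
most the sum of the `L¹`, hence `L²`, errors: `(n + 1) ε / 2 ^ (n + 1) ≤ ε`. With the
approximants in place, writing `p = Σ aᵢ χᵢ`, each character pulls the shift `ρ t` out of the
integral as the factor `χᵢ (ρ t)`, so the approximating correlation is a trigonometric polynomial
in `t`.
-/

open MeasureTheory

/-- A trigonometric polynomial on a topological abelian group: a finite linear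
combination of continuous characters (homomorphisms into the circle). -/
def IsTrigPolyCont {K : Type*} [AddCommGroup K] [TopologicalSpace K] (p : K → ℂ) : Prop :=
  ∃ (d : ℕ) (a : Fin d → ℂ) (χ : Fin d → AddChar K ℂ),
    (∀ i, Continuous (χ i)) ∧ (∀ i x, ‖χ i x‖ = 1) ∧ ∀ x, p x = ∑ i, a i * χ i x

/-- A trigonometric polynomial on a discrete abelian group `G`. -/
def IsTrigPoly {G : Type*} [AddCommGroup G] (p : G → ℂ) : Prop :=
  ∃ (d : ℕ) (a : Fin d → ℂ) (χ : Fin d → AddChar G ℂ),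
    (∀ i x, ‖χ i x‖ = 1) ∧ ∀ x, p x = ∑ i, a i * χ i x

theorem norm_prod_sub_prod_le_sum {R ι : Type*} [NormedCommRing R] [NormOneClass R]
    (s : Finset ι) {u v : ι → R} (hu : ∀ i ∈ s, ‖u i‖ ≤ 1) (hv : ∀ i ∈ s, ‖v i‖ ≤ 1) :
    ‖∏ i ∈ s, u i - ∏ i ∈ s, v i‖ ≤ ∑ i ∈ s, ‖u i - v i‖ := by
  induction s using Finset.cons_induction with
  | empty => simp
  | cons a s _ ih =>
    simp only [Finset.forall_mem_cons] at hu hv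
    rw [Finset.prod_cons, Finset.prod_cons, Finset.sum_cons]
    have hprod : ‖∏ i ∈ s, v i‖ ≤ 1 :=
      (Finset.norm_prod_le _ _).trans (Finset.prod_le_one (fun _ _ => norm_nonneg _) hv.2)
    calc ‖u a * ∏ i ∈ s, u i - v a * ∏ i ∈ s, v i‖
        = ‖u a * (∏ i ∈ s, u i - ∏ i ∈ s, v i) + (u a - v a) * ∏ i ∈ s, v i‖ := by ring_nf
      _ ≤ ‖u a‖ * ‖∏ i ∈ s, u i - ∏ i ∈ s, v i‖ + ‖u a - v a‖ * ‖∏ i ∈ s, v i‖ :=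
        (norm_add_le _ _).trans (add_le_add (norm_mul_le _ _) (norm_mul_le _ _))
      _ ≤ 1 * ∑ i ∈ s, ‖u i - v i‖ + ‖u a - v a‖ * 1 := by
        gcongr
        exacts [hu.1, ih hu.2 hv.2]
      _ = ‖u a - v a‖ + ∑ i ∈ s, ‖u i - v i‖ := by ring

theorem norm_mul_prod_sub_mul_prod_le {R ι : Type*} [NormedCommRing R] [NormOneClass R]
    (s : Finset ι) {a b : R} {u v : ι → R} (hb : ‖b‖ ≤ 1) (hu : ∀ i ∈ s, ‖u i‖ ≤ 1)
    (hv : ∀ i ∈ s, ‖v i‖ ≤ 1) :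
    ‖a * ∏ i ∈ s, u i - b * ∏ i ∈ s, v i‖ ≤ ‖a - b‖ + ∑ i ∈ s, ‖u i - v i‖ := by
  have hprod : ‖∏ i ∈ s, u i‖ ≤ 1 :=
    (Finset.norm_prod_le _ _).trans (Finset.prod_le_one (fun _ _ => norm_nonneg _) hu)
  calc ‖a * ∏ i ∈ s, u i - b * ∏ i ∈ s, v i‖
      = ‖(a - b) * ∏ i ∈ s, u i + b * (∏ i ∈ s, u i - ∏ i ∈ s, v i)‖ := by ring_nf
    _ ≤ ‖a - b‖ * ‖∏ i ∈ s, u i‖ + ‖b‖ * ‖∏ i ∈ s, u i - ∏ i ∈ s, v i‖ :=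
      (norm_add_le _ _).trans (add_le_add (norm_mul_le _ _) (norm_mul_le _ _))
    _ ≤ ‖a - b‖ * 1 + 1 * ∑ i ∈ s, ‖u i - v i‖ := by
      gcongr
      exact norm_prod_sub_prod_le_sum s hu hv
    _ = ‖a - b‖ + ∑ i ∈ s, ‖u i - v i‖ := by ring

theorem integral_norm_le_of_eLpNorm_two_le {α E : Type*} [MeasurableSpace α]
    [NormedAddCommGroup E] {μ : Measure α} [IsProbabilityMeasure μ] {f : α → E}
    (hf : AEStronglyMeasurable f μ) {δ : ℝ} (hδ : 0 ≤ δ)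
    (h : eLpNorm f 2 μ ≤ ENNReal.ofReal δ) : ∫ x, ‖f x‖ ∂μ ≤ δ := by
  have h1 : eLpNorm f 1 μ ≤ ENNReal.ofReal δ :=
    (eLpNorm_le_eLpNorm_of_exponent_le (by norm_num) hf).trans h
  have hint : Integrable f μ := memLp_one_iff_integrable.mp ⟨hf, h1.trans_lt ENNReal.ofReal_lt_top⟩
  rwa [eLpNorm_one_eq_lintegral_enorm, ← ofReal_integral_norm_eq_lintegral_enorm hint,
    ENNReal.ofReal_le_ofReal_iff hδ] at h1

theorem Complex.norm_le_one_of_im_eq_zero {z : ℂ} (him : z.im = 0)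
    (hre : z.re ∈ Set.Icc (0 : ℝ) 1) : ‖z‖ ≤ 1 := by
  have := Complex.norm_le_abs_re_add_abs_im z
  rw [him, abs_zero, add_zero, abs_of_nonneg hre.1] at this
  exact this.trans hre.2

section MultiCorrelation

variable {K : Type*} [AddCommGroup K] {n : ℕ}

def correlationIntegrand (c : Fin n → ℤ) (cd : ℤ) (g : K → ℂ) (h : Fin n → K → ℂ) (x : K)
    (s : Fin n → K) (k : K) : ℂ :=
  g (k + x - ∑ j, c j • s j) * ∏ j, h j (k + cd • s j)

noncomputable def multiCorrelation [MeasurableSpace K] (m : Measure K) (c : Fin n → ℤ) (cd : ℤ)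
    (g : K → ℂ) (h : Fin n → K → ℂ) (x : K) : ℂ :=
  ∫ s, ∫ k, correlationIntegrand c cd g h x s k ∂m ∂Measure.pi fun _ => m

variable (c : Fin n → ℤ) (cd : ℤ) {g : K → ℂ} {h : Fin n → K → ℂ}

theorem correlationIntegrand_addChar (χ : AddChar K ℂ) (x : K) (s : Fin n → K) (k : K) :
    correlationIntegrand c cd χ h x s k = χ x * correlationIntegrand c cd χ h 0 s k := by
  rw [correlationIntegrand, correlationIntegrand, add_zero, add_comm k x, add_sub_assoc,
    AddChar.map_add_eq_mul, mul_assoc]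

theorem norm_correlationIntegrand_le_one (hg1 : ∀ y, ‖g y‖ ≤ 1) (hh1 : ∀ j y, ‖h j y‖ ≤ 1)
    (x : K) (s : Fin n → K) (k : K) : ‖correlationIntegrand c cd g h x s k‖ ≤ 1 := by
  rw [correlationIntegrand, norm_mul, norm_prod]
  exact mul_le_one₀ (hg1 _) (by positivity)
    (Finset.prod_le_one (fun _ _ => norm_nonneg _) fun j _ => hh1 j _)

variable [MeasurableSpace K] [MeasurableAdd₂ K] [MeasurableNeg K]

theorem measurable_correlationIntegrand (hg : Measurable g) (hh : ∀ j, Measurable (h j))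
    (x : K) :
    Measurable (Function.uncurry (correlationIntegrand c cd g h x)) := by
  unfold correlationIntegrand Function.uncurry
  fun_prop

variable {m : Measure K} [IsProbabilityMeasure m]

theorem integrable_correlationIntegrand (hg : Measurable g) (hh : ∀ j, Measurable (h j))
    (hg1 : ∀ y, ‖g y‖ ≤ 1) (hh1 : ∀ j y, ‖h j y‖ ≤ 1) (x : K) (s : Fin n → K) :
    Integrable (correlationIntegrand c cd g h x s) m :=
  .of_bound ((measurable_correlationIntegrand c cd hg hh x).comp
      measurable_prodMk_left).aestronglyMeasurable 1
    (.of_forall (norm_correlationIntegrand_le_one c cd hg1 hh1 x s))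

theorem integrable_integral_correlationIntegrand (hg : Measurable g) (hh : ∀ j, Measurable (h j))
    (hg1 : ∀ y, ‖g y‖ ≤ 1) (hh1 : ∀ j y, ‖h j y‖ ≤ 1) (x : K) :
    Integrable (fun s => ∫ k, correlationIntegrand c cd g h x s k ∂m) (Measure.pi fun _ => m) :=
  .of_bound (StronglyMeasurable.integral_prod_right
      (measurable_correlationIntegrand c cd hg hh x).stronglyMeasurable).aestronglyMeasurable 1
    (.of_forall fun s =>
      (norm_integral_le_of_norm_le_const
        (.of_forall (norm_correlationIntegrand_le_one c cd hg1 hh1 x s))).trans (by simp))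

theorem multiCorrelation_sum_mul_addChar {N : ℕ} (a : Fin N → ℂ) {χ : Fin N → AddChar K ℂ}
    (hχ : ∀ i, Measurable (χ i)) (hχ1 : ∀ i y, ‖χ i y‖ = 1) (hh : ∀ j, Measurable (h j))
    (hh1 : ∀ j y, ‖h j y‖ ≤ 1) (x : K) :
    multiCorrelation m c cd (fun y => ∑ i, a i * χ i y) h x
      = ∑ i, a i * multiCorrelation m c cd (χ i) h 0 * χ i x := by
  have hχ1' : ∀ i y, ‖χ i y‖ ≤ 1 := fun i y => (hχ1 i y).le
  have hsplit : ∀ s k, correlationIntegrand c cd (fun y => ∑ i, a i * χ i y) h x s k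
      = ∑ i, a i * χ i x * correlationIntegrand c cd (χ i) h 0 s k := by
    intro s k
    rw [correlationIntegrand, Finset.sum_mul]
    refine Finset.sum_congr rfl fun i _ => ?_
    rw [mul_assoc (a i) (χ i x), ← correlationIntegrand_addChar, correlationIntegrand, mul_assoc]
  calc multiCorrelation m c cd (fun y => ∑ i, a i * χ i y) h x
      = ∫ s, ∑ i, a i * χ i x * ∫ k, correlationIntegrand c cd (χ i) h 0 s k ∂m
          ∂Measure.pi fun _ => m := by
        refine integral_congr_ae (.of_forall fun s => ?_)
        simp only [hsplit, ← integral_const_mul]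
        exact integral_finsetSum _ fun i _ =>
          (integrable_correlationIntegrand c cd (hχ i) hh (hχ1' i) hh1 0 s).const_mul _
    _ = ∑ i, a i * multiCorrelation m c cd (χ i) h 0 * χ i x := by
        rw [integral_finsetSum _ fun i _ =>
          (integrable_integral_correlationIntegrand c cd (hχ i) hh (hχ1' i) hh1 0).const_mul _]
        refine Finset.sum_congr rfl fun i _ => ?_
        rw [integral_const_mul, multiCorrelation]
        ring

variable [m.IsAddRightInvariant] {g' : K → ℂ} {h' : Fin n → K → ℂ}

theorem norm_integral_correlationIntegrand_sub_le (hg : Measurable g) (hg' : Measurable g')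
    (hh : ∀ j, Measurable (h j)) (hh' : ∀ j, Measurable (h' j)) (hg1 : ∀ y, ‖g y‖ ≤ 1)
    (hg1' : ∀ y, ‖g' y‖ ≤ 1) (hh1 : ∀ j y, ‖h j y‖ ≤ 1) (hh1' : ∀ j y, ‖h' j y‖ ≤ 1) (x : K)
    (s : Fin n → K) :
    ‖∫ k, correlationIntegrand c cd g h x s k ∂m - ∫ k, correlationIntegrand c cd g' h' x s k ∂m‖
      ≤ ∫ y, ‖g y - g' y‖ ∂m + ∑ j, ∫ y, ‖h j y - h' j y‖ ∂m := by
  have hF := integrable_correlationIntegrand c cd hg hh hg1 hh1 x s (m := m)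
  have hF' := integrable_correlationIntegrand c cd hg' hh' hg1' hh1' x s (m := m)
  have hbdd : ∀ {e : K → ℂ}, Measurable e → (∀ y, ‖e y‖ ≤ 1) → Integrable e m :=
    fun he he1 => .of_bound he.aestronglyMeasurable 1 (.of_forall he1)
  have herr : Integrable (fun y => ‖g y - g' y‖) m := ((hbdd hg hg1).sub (hbdd hg' hg1')).norm
  have herrj : ∀ j, Integrable (fun y => ‖h j y - h' j y‖) m := fun j =>
    ((hbdd (hh j) (hh1 j)).sub (hbdd (hh' j) (hh1' j))).norm
  calc ‖∫ k, correlationIntegrand c cd g h x s k ∂m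
        - ∫ k, correlationIntegrand c cd g' h' x s k ∂m‖
      ≤ ∫ k, ‖correlationIntegrand c cd g h x s k - correlationIntegrand c cd g' h' x s k‖ ∂m := by
        rw [← integral_sub hF hF']
        exact norm_integral_le_integral_norm _
    _ ≤ ∫ k, (‖g (k + (x - ∑ j, c j • s j)) - g' (k + (x - ∑ j, c j • s j))‖
          + ∑ j, ‖h j (k + cd • s j) - h' j (k + cd • s j)‖) ∂m := by
        refine integral_mono (hF.sub hF').norm ((herr.comp_add_right _).add
          (integrable_finsetSum _ fun j _ => (herrj j).comp_add_right _)) fun k => ?_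
        simp only [correlationIntegrand, add_sub_assoc]
        exact norm_mul_prod_sub_mul_prod_le _ (hg1' _) (fun j _ => hh1 j _) (fun j _ => hh1' j _)
    _ = ∫ y, ‖g y - g' y‖ ∂m + ∑ j, ∫ y, ‖h j y - h' j y‖ ∂m := by
        rw [integral_add (herr.comp_add_right _)
            (integrable_finsetSum _ fun j _ => (herrj j).comp_add_right _),
          integral_finsetSum _ fun j _ => (herrj j).comp_add_right _,
          integral_add_right_eq_self (fun y => ‖g y - g' y‖)]
        congr 1
        exact Finset.sum_congr rfl fun j _ =>
          integral_add_right_eq_self (fun y => ‖h j y - h' j y‖) _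

theorem norm_multiCorrelation_sub_le (hg : Measurable g) (hg' : Measurable g')
    (hh : ∀ j, Measurable (h j)) (hh' : ∀ j, Measurable (h' j)) (hg1 : ∀ y, ‖g y‖ ≤ 1)
    (hg1' : ∀ y, ‖g' y‖ ≤ 1) (hh1 : ∀ j y, ‖h j y‖ ≤ 1) (hh1' : ∀ j y, ‖h' j y‖ ≤ 1) (x : K) :
    ‖multiCorrelation m c cd g h x - multiCorrelation m c cd g' h' x‖
      ≤ ∫ y, ‖g y - g' y‖ ∂m + ∑ j, ∫ y, ‖h j y - h' j y‖ ∂m := by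
  rw [multiCorrelation, multiCorrelation,
    ← integral_sub (integrable_integral_correlationIntegrand c cd hg hh hg1 hh1 x)
      (integrable_integral_correlationIntegrand c cd hg' hh' hg1' hh1' x)]
  refine (norm_integral_le_of_norm_le_const (.of_forall fun s =>
    norm_integral_correlationIntegrand_sub_le c cd hg hg' hh hh' hg1 hg1' hh1 hh1' x s)).trans ?_
  simp

end MultiCorrelation

theorem IsTrigPolyCont.continuous {K : Type*} [AddCommGroup K] [TopologicalSpace K] {p : K → ℂ}
    (hp : IsTrigPolyCont p) : Continuous p := by
  obtain ⟨N, a, χ, hχc, -, hp⟩ := hp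
  rw [funext hp]
  fun_prop

theorem IsTrigPolyCont.isTrigPoly_multiCorrelation_comp {K : Type*} [AddCommGroup K]
    [TopologicalSpace K] [MeasurableSpace K] [OpensMeasurableSpace K] [MeasurableAdd₂ K]
    [MeasurableNeg K] {m : Measure K} [IsProbabilityMeasure m] {n : ℕ} (c : Fin n → ℤ) (cd : ℤ)
    {p : K → ℂ} (hp : IsTrigPolyCont p) {h : Fin n → K → ℂ} (hh : ∀ j, Measurable (h j))
    (hh1 : ∀ j y, ‖h j y‖ ≤ 1) {G : Type*} [AddCommGroup G] (ρ : G →+ K) :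
    IsTrigPoly fun t => multiCorrelation m c cd p h (ρ t) := by
  obtain ⟨N, a, χ, hχc, hχ1, hp⟩ := hp
  obtain rfl : p = fun y => ∑ i, a i * χ i y := funext hp
  exact ⟨N, fun i => a i * multiCorrelation m c cd (χ i) h 0, fun i => (χ i).compAddMonoidHom ρ,
    fun i t => hχ1 i (ρ t), fun t =>
      multiCorrelation_sum_mul_addChar c cd a (fun i => (hχc i).measurable) hχ1 hh hh1 (ρ t)⟩

theorem ofReal_integral_integral_eq_multiCorrelation {K : Type*} [AddCommGroup K]
    [MeasurableSpace K] (m : Measure K) {n : ℕ} (c : Fin n → ℤ) (cd : ℤ) (g : K → ℝ)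
    (h : Fin n → K → ℝ) (x : K) :
    ((∫ s, ∫ k, g (k + x - ∑ j, c j • s j) * ∏ j, h j (k + cd • s j) ∂m
        ∂Measure.pi fun _ => m : ℝ) : ℂ)
      = multiCorrelation m c cd (fun y => g y) (fun j y => h j y) x := by
  simp only [multiCorrelation, correlationIntegrand, ← Complex.ofReal_prod, ← Complex.ofReal_mul,
    integral_complex_ofReal]

/-- `n = d - 1`: `f j` stands for `f̃_1, …, f̃_{d-1}`, `fd` for `f̃_d`, `c j` for `c_1, …, c_{d-1}`
and `cd` for `c_d`. -/
theorem stmt13_general {K : Type*} [AddCommGroup K] [TopologicalSpace K] [IsTopologicalAddGroup K]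
    [CompactSpace K] [TopologicalSpace.MetrizableSpace K] [MeasurableSpace K] [BorelSpace K]
    (m : Measure K) [m.IsAddHaarMeasure] [IsProbabilityMeasure m]
    {G : Type*} [AddCommGroup G]
    (ρ : G →+ K)
    (n : ℕ) (f : Fin n → K → ℝ) (fd : K → ℝ)
    (hf : ∀ j, Measurable (f j)) (hfd : Measurable fd)
    (hf01 : ∀ j x, f j x ∈ Set.Icc (0 : ℝ) 1) (hfd01 : ∀ x, fd x ∈ Set.Icc (0 : ℝ) 1)
    (c : Fin n → ℤ) (cd : ℤ) (ε : ℝ) (hε : 0 < ε)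
    (happrox : ∀ j : Fin n, ∃ p : K → ℂ, IsTrigPolyCont p ∧
      (∀ x, (p x).im = 0 ∧ (p x).re ∈ Set.Icc (0 : ℝ) 1) ∧
      eLpNorm (fun x => (f j x : ℂ) - p x) 2 m ≤ ENNReal.ofReal (ε / 2 ^ (n + 1)))
    (happroxd : ∃ p : K → ℂ, IsTrigPolyCont p ∧
      (∀ x, (p x).im = 0 ∧ (p x).re ∈ Set.Icc (0 : ℝ) 1) ∧
      eLpNorm (fun x => (fd x : ℂ) - p x) 2 m ≤ ENNReal.ofReal (ε / 2 ^ (n + 1)))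
    (φ : G → ℝ)
    (hφ : ∀ t : G, φ t = ∫ s : Fin n → K,
      (∫ k, fd (k + ρ t - ∑ j, c j • s j) * ∏ j, f j (k + cd • s j) ∂m)
        ∂(Measure.pi fun _ => m)) :
    ∃ P : G → ℂ, IsTrigPoly P ∧ ∀ t, ‖(φ t : ℂ) - P t‖ ≤ ε := by
  obtain ⟨p, hp, hp01, hpL2⟩ := happroxd
  choose q hq hq01 hqL2 using happrox
  have hfdm : Measurable fun y => (fd y : ℂ) := by fun_prop
  have hfm : ∀ j, Measurable fun y => (f j y : ℂ) := fun j => by fun_prop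
  have hpm : Measurable p := hp.continuous.measurable
  have hqm : ∀ j, Measurable (q j) := fun j => (hq j).continuous.measurable
  have hδ : 0 ≤ ε / 2 ^ (n + 1) := by positivity
  refine ⟨fun t => multiCorrelation m c cd p q (ρ t), hp.isTrigPoly_multiCorrelation_comp c cd hqm
    (fun j y => Complex.norm_le_one_of_im_eq_zero (hq01 j y).1 (hq01 j y).2) ρ, fun t => ?_⟩
  rw [hφ, ofReal_integral_integral_eq_multiCorrelation]
  calc _ ≤ ∫ y, ‖(fd y : ℂ) - p y‖ ∂m + ∑ j, ∫ y, ‖(f j y : ℂ) - q j y‖ ∂m :=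
        norm_multiCorrelation_sub_le c cd hfdm hpm hfm hqm
          (fun y => Complex.norm_le_one_of_im_eq_zero (Complex.ofReal_im _) (hfd01 y))
          (fun y => Complex.norm_le_one_of_im_eq_zero (hp01 y).1 (hp01 y).2)
          (fun j y => Complex.norm_le_one_of_im_eq_zero (Complex.ofReal_im _) (hf01 j y))
          (fun j y => Complex.norm_le_one_of_im_eq_zero (hq01 j y).1 (hq01 j y).2) _
    _ ≤ ε / 2 ^ (n + 1) + ∑ _j : Fin n, ε / 2 ^ (n + 1) := by
        gcongr with j
        · exact integral_norm_le_of_eLpNorm_two_le (hfdm.sub hpm).aestronglyMeasurable hδ hpL2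
        · exact integral_norm_le_of_eLpNorm_two_le ((hfm j).sub (hqm j)).aestronglyMeasurable hδ
            (hqL2 j)
    _ = (n + 1) * (ε / 2 ^ (n + 1)) := by
        rw [Finset.sum_const, Finset.card_univ, Fintype.card_fin, nsmul_eq_mul]
        ring
    _ ≤ 2 ^ (n + 1) * (ε / 2 ^ (n + 1)) := by
        gcongr
        exact_mod_cast n.succ.lt_two_pow_self.le
    _ = ε := by field_simp

/-- with `n = d - 1`; `f j` (`j : Fin n`) play the role of
`f̃_1, …, f̃_{d-1}`, `fd` of `f̃_d`, `c j` of `c_1, …, c_{d-1}` and `cd` of `c_d`,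
and `d = n + 1`. -/
theorem stmt13 {K : Type*} [AddCommGroup K] [TopologicalSpace K] [IsTopologicalAddGroup K]
    [CompactSpace K] [TopologicalSpace.MetrizableSpace K] [MeasurableSpace K] [BorelSpace K]
    (m : Measure K) [m.IsAddHaarMeasure] [IsProbabilityMeasure m]
    {G : Type*} [AddCommGroup G] [Countable G]
    (ρ : G →+ K) (hρ : DenseRange ρ)
    (n : ℕ) (f : Fin n → K → ℝ) (fd : K → ℝ)
    (hf : ∀ j, Measurable (f j)) (hfd : Measurable fd)
    (hf01 : ∀ j x, f j x ∈ Set.Icc (0 : ℝ) 1) (hfd01 : ∀ x, fd x ∈ Set.Icc (0 : ℝ) 1)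
    (c : Fin n → ℤ) (cd : ℤ) (ε : ℝ) (hε : 0 < ε)
    (happrox : ∀ j : Fin n, ∃ p : K → ℂ, IsTrigPolyCont p ∧
      (∀ x, (p x).im = 0 ∧ (p x).re ∈ Set.Icc (0 : ℝ) 1) ∧
      eLpNorm (fun x => (f j x : ℂ) - p x) 2 m ≤ ENNReal.ofReal (ε / 2 ^ (n + 1)))
    (happroxd : ∃ p : K → ℂ, IsTrigPolyCont p ∧
      (∀ x, (p x).im = 0 ∧ (p x).re ∈ Set.Icc (0 : ℝ) 1) ∧
      eLpNorm (fun x => (fd x : ℂ) - p x) 2 m ≤ ENNReal.ofReal (ε / 2 ^ (n + 1)))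
    (φ : G → ℝ)
    (hφ : ∀ t : G, φ t = ∫ s : Fin n → K,
      (∫ k, fd (k + ρ t - ∑ j, c j • s j) * ∏ j, f j (k + cd • s j) ∂m)
        ∂(Measure.pi fun _ => m)) :
    ∃ P : G → ℂ, IsTrigPoly P ∧ ∀ t, ‖(φ t : ℂ) - P t‖ ≤ ε :=
  stmt13_general m ρ n f fd hf hfd hf01 hfd01 c cd ε hε happrox happroxd φ hφ
end

section
/- Let G be a countable abelian group and let m be an extreme point of the set of invariant means on ℓ^∞(G). Then for any invariant mean η and any φ_1, φ_2 ∈ ℓ^∞(G): η(Φ) = m(φ_1)·m(φ_2), where Φ(h) := m(g ↦ φ_1(g)·φ_2(g+h)). -/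
open Filter BoundedContinuousFunction
open scoped Classical

section Defs

variable (G : Type*) [AddCommGroup G] [TopologicalSpace G] [DiscreteTopology G] [DecidableEq G]

/-- `F` is a Følner sequence in `G`. -/
def IsFolner (F : ℕ → Finset G) : Prop :=
  (∀ n, (F n).Nonempty) ∧ ∀ g : G,
    Tendsto (fun n => ((symmDiff (F n) ((F n).image (g + ·))).card : ℝ) / (F n).card)
      atTop (nhds 0)

/-- Upper Banach density: the sup over Følner sequences of the upper density along them. -/
noncomputable def upperBanachDensity (A : Set G) : ℝ :=
  sSup { x | ∃ F : ℕ → Finset G, IsFolner G F ∧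
    x = limsup (fun n => (((F n).filter (fun g => g ∈ A)).card : ℝ) / (F n).card) atTop }

/-- The translate `φ_t` of `φ ∈ ℓ^∞(G)`, `φ_t (g) = φ (g + t)`. -/
def translateBCF (φ : G →ᵇ ℝ) (t : G) : G →ᵇ ℝ :=
  φ.compContinuous ⟨fun g => g + t, continuous_of_discreteTopology⟩

/-- An invariant mean on `ℓ^∞(G)`: a positive unital translation-invariant linear functional. -/
def IsInvariantMean (m : (G →ᵇ ℝ) →ₗ[ℝ] ℝ) : Prop :=
  (∀ φ : G →ᵇ ℝ, (∀ g, 0 ≤ φ g) → 0 ≤ m φ) ∧ m 1 = 1 ∧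
    ∀ (φ : G →ᵇ ℝ) (t : G), m (translateBCF G φ t) = m φ

end Defs

set_option linter.unusedSectionVars false

section Aux
variable {G : Type*} [AddCommGroup G] [TopologicalSpace G] [DiscreteTopology G] [DecidableEq G]
lemma translateBCF_apply (φ : G →ᵇ ℝ) (t g : G) : translateBCF G φ t g = φ (g + t) := rfl
lemma mean_const (m : (G →ᵇ ℝ) →ₗ[ℝ] ℝ) (hm : IsInvariantMean G m) (c : ℝ) :
    m (c • 1) = c := by rw [map_smul, hm.2.1]; simp
lemma mean_mono (m : (G →ᵇ ℝ) →ₗ[ℝ] ℝ) (hm : IsInvariantMean G m) {φ χ : G →ᵇ ℝ}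
    (h : ∀ g, φ g ≤ χ g) : m φ ≤ m χ := by
  have h1 : 0 ≤ m (χ - φ) := hm.1 _ (fun g => by simpa using h g)
  have h2 : m (χ - φ) = m χ - m φ := map_sub m χ φ
  linarith
lemma mean_abs_le (m : (G →ᵇ ℝ) →ₗ[ℝ] ℝ) (hm : IsInvariantMean G m) (χ : G →ᵇ ℝ) :
    |m χ| ≤ ‖χ‖ := by
  have h1 : m χ ≤ m (‖χ‖ • 1) := mean_mono m hm (fun g => by
    simpa using (le_abs_self (χ g)).trans (χ.norm_coe_le_norm g))
  have h2 : m ((-‖χ‖) • 1) ≤ m χ := mean_mono m hm (fun g => by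
    have := (neg_abs_le (χ g)).trans' (neg_le_neg (χ.norm_coe_le_norm g))
    simpa using this)
  rw [mean_const m hm] at h1; rw [mean_const m hm] at h2
  rw [abs_le]; exact ⟨h2, h1⟩
noncomputable def Phi (m : (G →ᵇ ℝ) →ₗ[ℝ] ℝ) (hm : IsInvariantMean G m) (ψ φ : G →ᵇ ℝ) :
    G →ᵇ ℝ :=
  BoundedContinuousFunction.ofNormedAddCommGroup
    (fun h => m (φ * translateBCF G ψ h)) continuous_of_discreteTopology (‖φ‖ * ‖ψ‖)
    (fun h => by
      have h1 := mean_abs_le m hm (φ * translateBCF G ψ h)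
      have h2 : ‖φ * translateBCF G ψ h‖ ≤ ‖φ‖ * ‖translateBCF G ψ h‖ := norm_mul_le _ _
      have h3 : ‖translateBCF G ψ h‖ ≤ ‖ψ‖ := norm_compContinuous_le _ _
      have h4 : ‖φ‖ * ‖translateBCF G ψ h‖ ≤ ‖φ‖ * ‖ψ‖ :=
        mul_le_mul_of_nonneg_left h3 (norm_nonneg _)
      simpa [Real.norm_eq_abs] using h1.trans (h2.trans h4))
lemma Phi_apply (m : (G →ᵇ ℝ) →ₗ[ℝ] ℝ) (hm : IsInvariantMean G m) (ψ φ : G →ᵇ ℝ) (h : G) :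
    Phi m hm ψ φ h = m (φ * translateBCF G ψ h) := rfl

-- NEW PART
variable (m : (G →ᵇ ℝ) →ₗ[ℝ] ℝ) (hm : IsInvariantMean G m)
  (η : (G →ᵇ ℝ) →ₗ[ℝ] ℝ) (hη : IsInvariantMean G η)

/-- The key linear functional `φ ↦ η (Phi m ψ φ)`. -/
noncomputable def Lmap (ψ : G →ᵇ ℝ) : (G →ᵇ ℝ) →ₗ[ℝ] ℝ where
  toFun φ := η (Phi m hm ψ φ)
  map_add' φ φ' := by
    show η (Phi m hm ψ (φ + φ')) = η (Phi m hm ψ φ) + η (Phi m hm ψ φ')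
    have : Phi m hm ψ (φ + φ') = Phi m hm ψ φ + Phi m hm ψ φ' := by
      ext h
      simp only [Phi_apply, BoundedContinuousFunction.add_apply, add_mul, map_add]
    rw [this, map_add]
  map_smul' c φ := by
    show η (Phi m hm ψ (c • φ)) = c • η (Phi m hm ψ φ)
    have : Phi m hm ψ (c • φ) = c • Phi m hm ψ φ := by
      ext h
      simp only [Phi_apply, BoundedContinuousFunction.smul_apply, smul_mul_assoc, map_smul,
        smul_eq_mul]
    rw [this, map_smul]

lemma Lmap_apply (ψ φ : G →ᵇ ℝ) : Lmap m hm η ψ φ = η (Phi m hm ψ φ) := rfl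

/-- translation identity: `φ_t * ψ_h = (φ * ψ_{h-t})_t`. -/
lemma mul_translate (φ ψ : G →ᵇ ℝ) (t h : G) :
    translateBCF G φ t * translateBCF G ψ h =
      translateBCF G (φ * translateBCF G ψ (h - t)) t := by
  ext g
  simp only [BoundedContinuousFunction.mul_apply, translateBCF_apply]
  congr 2
  abel

lemma Phi_translate (ψ φ : G →ᵇ ℝ) (t : G) :
    Phi m hm ψ (translateBCF G φ t) = translateBCF G (Phi m hm ψ φ) (-t) := by
  ext h
  rw [translateBCF_apply, Phi_apply, Phi_apply, mul_translate, hm.2.2]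
  congr 2
  abel

include hη in
lemma Lmap_invariant (ψ φ : G →ᵇ ℝ) (t : G) :
    Lmap m hm η ψ (translateBCF G φ t) = Lmap m hm η ψ φ := by
  rw [Lmap_apply, Lmap_apply, Phi_translate, hη.2.2]

lemma translateBCF_one (h : G) : translateBCF G (1 : G →ᵇ ℝ) h = 1 := by
  ext g; rfl

lemma Phi_one_right (φ : G →ᵇ ℝ) : Phi m hm 1 φ = m φ • 1 := by
  ext h
  rw [Phi_apply, translateBCF_one, mul_one]
  simp

lemma Phi_one_left (ψ : G →ᵇ ℝ) : Phi m hm ψ 1 = m ψ • 1 := by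
  ext h
  rw [Phi_apply, one_mul, hm.2.2]
  simp

include hm in
lemma Phi_zero_of_mean_zero (ψ : G →ᵇ ℝ) (h0 : ∀ g, 0 ≤ ψ g) (hc : m ψ = 0) (φ : G →ᵇ ℝ) :
    Phi m hm ψ φ = 0 := by
  ext h
  rw [Phi_apply]
  have hψh : m (translateBCF G ψ h) = 0 := by rw [hm.2.2, hc]
  have hb1 : m (φ * translateBCF G ψ h) ≤ m (‖φ‖ • translateBCF G ψ h) := by
    apply mean_mono m hm
    intro g
    simp only [BoundedContinuousFunction.mul_apply, BoundedContinuousFunction.smul_apply,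
      translateBCF_apply, smul_eq_mul]
    exact mul_le_mul_of_nonneg_right ((le_abs_self _).trans (φ.norm_coe_le_norm g)) (h0 _)
  have hb2 : m ((-‖φ‖) • translateBCF G ψ h) ≤ m (φ * translateBCF G ψ h) := by
    apply mean_mono m hm
    intro g
    simp only [BoundedContinuousFunction.mul_apply, BoundedContinuousFunction.smul_apply,
      translateBCF_apply, smul_eq_mul, neg_mul]
    have : -(φ g) ≤ ‖φ‖ := (neg_le_abs _).trans (φ.norm_coe_le_norm g)
    nlinarith [h0 (g + h)]
  rw [map_smul, smul_eq_mul, hψh, mul_zero] at hb1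
  rw [map_smul, smul_eq_mul, hψh, mul_zero] at hb2
  simp only [BoundedContinuousFunction.coe_zero, Pi.zero_apply]
  linarith

include hm hη in
/-- The main identity for `ψ` with values in `[0,1]`. -/
lemma main01 (hextreme : ∀ (m₁ m₂ : (G →ᵇ ℝ) →ₗ[ℝ] ℝ) (θ : ℝ), IsInvariantMean G m₁ →
      IsInvariantMean G m₂ → 0 < θ → θ < 1 → m = θ • m₁ + (1 - θ) • m₂ → m₁ = m₂)
    (ψ : G →ᵇ ℝ) (h0 : ∀ g, 0 ≤ ψ g) (h1 : ∀ g, ψ g ≤ 1) (φ : G →ᵇ ℝ) :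
    η (Phi m hm ψ φ) = m φ * m ψ := by
  set c : ℝ := m ψ with hc
  have hc0 : 0 ≤ c := hm.1 ψ h0
  have hc1 : c ≤ 1 := by
    have := mean_mono m hm (χ := 1) (fun g => by simpa using h1 g)
    rwa [hm.2.1] at this
  -- complementary function
  have hcompl : ∀ φ' : G →ᵇ ℝ, Phi m hm (1 - ψ) φ' = m φ' • 1 - Phi m hm ψ φ' := by
    intro φ'
    ext h
    have htr : translateBCF G (1 - ψ) h = 1 - translateBCF G ψ h := by ext g; rfl
    rw [Phi_apply, htr, mul_sub, mul_one, map_sub]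
    simp [Phi_apply]
  rcases eq_or_lt_of_le hc0 with hz | hpos
  · -- c = 0
    have := Phi_zero_of_mean_zero m hm ψ h0 hz.symm φ
    rw [this, map_zero, ← hz, mul_zero]
  rcases eq_or_lt_of_le hc1 with ho | hlt
  · -- c = 1
    have hmz : m (1 - ψ) = 0 := by rw [map_sub, hm.2.1, ← hc, ← ho]; ring
    have h0' : ∀ g, 0 ≤ (1 - ψ) g := fun g => by simpa using h1 g
    have hz := Phi_zero_of_mean_zero m hm (1 - ψ) h0' hmz φ
    rw [hcompl φ] at hz
    have hP : Phi m hm ψ φ = m φ • 1 := (sub_eq_zero.mp hz).symm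
    rw [hP, map_smul, smul_eq_mul, hη.2.1, mul_one, ho, mul_one]
  -- 0 < c < 1
  · set L := Lmap m hm η ψ with hL
    have hLpos : ∀ φ' : G →ᵇ ℝ, (∀ g, 0 ≤ φ' g) → 0 ≤ L φ' := by
      intro φ' hφ'
      apply hη.1
      intro h
      rw [Phi_apply]
      apply hm.1
      intro g
      simp only [BoundedContinuousFunction.mul_apply, translateBCF_apply]
      exact mul_nonneg (hφ' g) (h0 _)
    have hLle : ∀ φ' : G →ᵇ ℝ, (∀ g, 0 ≤ φ' g) → L φ' ≤ m φ' := by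
      intro φ' hφ'
      have hb : ∀ h, Phi m hm ψ φ' h ≤ (m φ' • (1 : G →ᵇ ℝ)) h := by
        intro h
        have h2 : (m φ' • (1 : G →ᵇ ℝ)) h = m φ' := by simp
        rw [Phi_apply, h2]
        apply mean_mono m hm (χ := φ')
        intro g
        simp only [BoundedContinuousFunction.mul_apply, translateBCF_apply]
        nlinarith [hφ' g, h1 (g + h), h0 (g + h)]
      have := mean_mono η hη hb
      rwa [mean_const η hη] at this
    have hL1 : L 1 = c := by
      rw [hL, Lmap_apply, Phi_one_left, map_smul, smul_eq_mul, hη.2.1, mul_one]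
    -- the two means
    have hcne : c ≠ 0 := ne_of_gt hpos
    have hcne1 : (1 : ℝ) - c ≠ 0 := by linarith
    have him1 : IsInvariantMean G (c⁻¹ • L) := by
      refine ⟨fun φ' hφ' => ?_, ?_, fun φ' t => ?_⟩
      · simp only [LinearMap.smul_apply, smul_eq_mul]
        exact mul_nonneg (inv_nonneg.mpr hc0) (hLpos φ' hφ')
      · simp only [LinearMap.smul_apply, smul_eq_mul]
        rw [hL1, inv_mul_cancel₀ hcne]
      · simp only [LinearMap.smul_apply, smul_eq_mul]
        rw [hL, Lmap_invariant m hm η hη]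
    have him2 : IsInvariantMean G ((1 - c)⁻¹ • (m - L)) := by
      refine ⟨fun φ' hφ' => ?_, ?_, fun φ' t => ?_⟩
      · simp only [LinearMap.smul_apply, LinearMap.sub_apply, smul_eq_mul]
        have := hLle φ' hφ'
        have h1c : (0:ℝ) ≤ (1 - c)⁻¹ := inv_nonneg.mpr (by linarith)
        exact mul_nonneg h1c (by linarith)
      · simp only [LinearMap.smul_apply, LinearMap.sub_apply, smul_eq_mul]
        rw [hm.2.1, hL1, inv_mul_cancel₀ hcne1]
      · simp only [LinearMap.smul_apply, LinearMap.sub_apply, smul_eq_mul]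
        rw [hm.2.2, hL, Lmap_invariant m hm η hη]
    have hdecomp : m = c • (c⁻¹ • L) + (1 - c) • ((1 - c)⁻¹ • (m - L)) := by
      rw [smul_smul, smul_smul, mul_inv_cancel₀ hcne, mul_inv_cancel₀ hcne1, one_smul, one_smul]
      abel
    have heq := hextreme (c⁻¹ • L) ((1 - c)⁻¹ • (m - L)) c him1 him2 hpos hlt hdecomp
    have h2 : c⁻¹ * L φ = (1 - c)⁻¹ * (m φ - L φ) := by
      have := LinearMap.congr_fun heq φ
      simpa only [LinearMap.smul_apply, LinearMap.sub_apply, smul_eq_mul] using this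
    have hLφ : L φ = m φ * c := by
      field_simp at h2
      linear_combination h2
    exact hLφ

lemma Phi_left_lin (a b : ℝ) (χ₁ χ₂ φ : G →ᵇ ℝ) :
    Phi m hm (a • χ₁ + b • χ₂) φ = a • Phi m hm χ₁ φ + b • Phi m hm χ₂ φ := by
  ext h
  have htr : translateBCF G (a • χ₁ + b • χ₂) h =
      a • translateBCF G χ₁ h + b • translateBCF G χ₂ h := by ext g; rfl
  simp only [Phi_apply, BoundedContinuousFunction.add_apply,
    BoundedContinuousFunction.smul_apply, smul_eq_mul, htr]
  rw [mul_add, mul_smul_comm, mul_smul_comm, map_add, map_smul, map_smul]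
  rfl

include hm hη in
lemma mainAll (hextreme : ∀ (m₁ m₂ : (G →ᵇ ℝ) →ₗ[ℝ] ℝ) (θ : ℝ), IsInvariantMean G m₁ →
      IsInvariantMean G m₂ → 0 < θ → θ < 1 → m = θ • m₁ + (1 - θ) • m₂ → m₁ = m₂)
    (ψ φ : G →ᵇ ℝ) : η (Phi m hm ψ φ) = m φ * m ψ := by
  set C : ℝ := ‖ψ‖ + 1 with hC
  have hCpos : (0:ℝ) < C := by positivity
  have habs : ∀ g, |ψ g| ≤ ‖ψ‖ := fun g => ψ.norm_coe_le_norm g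
  set ψ' : G →ᵇ ℝ := (2*C)⁻¹ • (ψ + C • 1) with hψ'
  have hψ'app : ∀ g, ψ' g = (2*C)⁻¹ * (ψ g + C) := by
    intro g
    simp [hψ']
    ring
  have h0 : ∀ g, 0 ≤ ψ' g := by
    intro g
    rw [hψ'app g]
    have h1 := (abs_le.mp (habs g)).1
    have : (0:ℝ) ≤ (2*C)⁻¹ := by positivity
    have : (0:ℝ) ≤ ψ g + C := by simp only [hC]; linarith
    positivity
  have h1 : ∀ g, ψ' g ≤ 1 := by
    intro g
    rw [hψ'app g]
    have h2 := (abs_le.mp (habs g)).2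
    rw [inv_mul_le_iff₀ (by positivity)]
    simp only [hC, mul_one]; linarith
  have hdec : ψ = (2*C) • ψ' + (-C) • 1 := by
    rw [hψ', smul_smul, mul_inv_cancel₀ (by positivity : (2*C) ≠ 0), one_smul]
    ext g
    simp
  clear_value ψ'
  have hkey := main01 m hm η hη hextreme ψ' h0 h1 φ
  have hmψ : m ψ = (2*C) * m ψ' + (-C) := by
    conv_lhs => rw [hdec]
    rw [map_add, map_smul, smul_eq_mul, mean_const m hm]
  calc η (Phi m hm ψ φ) = η (Phi m hm ((2*C) • ψ' + (-C) • 1) φ) := by rw [← hdec]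
    _ = (2*C) * η (Phi m hm ψ' φ) + (-C) * η (Phi m hm 1 φ) := by
        rw [Phi_left_lin, map_add, map_smul, map_smul, smul_eq_mul, smul_eq_mul]
    _ = (2*C) * (m φ * m ψ') + (-C) * m φ := by
        rw [hkey, Phi_one_right, map_smul η, smul_eq_mul, hη.2.1, mul_one]
    _ = m φ * m ψ := by rw [hmψ]; ring

end Aux

theorem stmt18 {G : Type*} [AddCommGroup G] [TopologicalSpace G] [DiscreteTopology G]
    [Countable G] [DecidableEq G]
    (m : (G →ᵇ ℝ) →ₗ[ℝ] ℝ) (hm : IsInvariantMean G m)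
    (hextreme : ∀ (m₁ m₂ : (G →ᵇ ℝ) →ₗ[ℝ] ℝ) (θ : ℝ), IsInvariantMean G m₁ →
      IsInvariantMean G m₂ → 0 < θ → θ < 1 → m = θ • m₁ + (1 - θ) • m₂ → m₁ = m₂)
    (η : (G →ᵇ ℝ) →ₗ[ℝ] ℝ) (hη : IsInvariantMean G η)
    (φ₁ φ₂ : G →ᵇ ℝ) (Φ : G →ᵇ ℝ)
    (hΦ : ∀ h : G, Φ h = m (φ₁ * translateBCF G φ₂ h)) :
    η Φ = m φ₁ * m φ₂ := by
  have hΦeq : Φ = Phi m hm φ₂ φ₁ := by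
    ext h
    rw [hΦ h, Phi_apply]
  rw [hΦeq, mainAll m hm η hη hextreme φ₂ φ₁]
end
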